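/- The direct and indirect SAT encodings of subsumption resolution are equisatisfiable: for any clauses S and M where M has no duplicate atoms, 𝓔ᵈ_SR(S,M) is satisfiable if and only if 𝓔ⁱ_SR(S,M) is satisfiable. -/
import Mathlib


/-- First-order terms over variables `V`. -/
inductive Trm (V : Type) : Type
  | var : V → Trm V
  | fn : ℕ → Trm V
  | app : Trm V → Trm V → Trm V
deriving DecidableEq

/-- Applying a (total) substitution to a term. -/
def Trm.subst {V : Type} (σ : V → Trm V) : Trm V → Trm V
  | .var x => σ x
  | .fn f => .fn f
  | .app t u => .app (t.subst σ) (u.subst σ)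

/-- A first-order literal: a polarity, a predicate symbol and an argument term. -/
structure Lit (V : Type) where
  pos : Bool
  pred : ℕ
  arg : Trm V
deriving DecidableEq

/-- The complement of a literal. -/
def Lit.neg {V : Type} (l : Lit V) : Lit V := { l with pos := !l.pos }

/-- Applying a substitution to a literal. -/
def Lit.subst {V : Type} (σ : V → Trm V) (l : Lit V) : Lit V :=
  { l with arg := l.arg.subst σ }

/-- A clause is a multiset of literals. -/
abbrev Clause (V : Type) := Multiset (Lit V)

/-- Applying a substitution to a clause. -/
def Clause.subst {V : Type} (σ : V → Trm V) (C : Clause V) : Clause V :=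
  C.map (Lit.subst σ)

/-- `S` subsumes `M`: some substitution maps `S` to a sub-multiset of `M`. -/
def Subsumes {V : Type} (S M : Clause V) : Prop :=
  ∃ σ : V → Trm V, Clause.subst σ S ≤ M

/-- `S` and `M` are side and main premises of subsumption resolution:
there are `σ`, a nonempty `S' ⊆ S` and `m' ∈ M` with `σ(S') = {¬m'}` and
`σ(S \ S') ⊆ M \ {m'}`. -/
def SubRes {V : Type} [DecidableEq V] (S M : Clause V) : Prop :=
  ∃ (σ : V → Trm V) (S' : Clause V) (m' : Lit V),
    S' ≤ S ∧ S' ≠ 0 ∧ m' ∈ M ∧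
    (∀ l ∈ S', Lit.subst σ l = m'.neg) ∧
    (∀ l ∈ S - S', Lit.subst σ l ∈ M.erase m')

/-- Partial substitutions. -/
abbrev PSub (V : Type) := V → Option (Trm V)

/-- Partial application of a partial substitution to a term. -/
def Trm.psubst {V : Type} (θ : PSub V) : Trm V → Option (Trm V)
  | .var x => θ x
  | .fn f => some (.fn f)
  | .app t u => (t.psubst θ).bind fun t' => (u.psubst θ).map fun u' => .app t' u'

/-- Partial application of a partial substitution to a literal. -/
def Lit.psubst {V : Type} (θ : PSub V) (l : Lit V) : Option (Lit V) :=
  (l.arg.psubst θ).map fun t => { l with arg := t }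

/-- `θ ⊆ σ`: the total substitution `σ` extends the partial substitution `θ`. -/
def PSub.le {V : Type} (θ : PSub V) (σ : V → Trm V) : Prop :=
  ∀ x t, θ x = some t → σ x = t

/-- The clause with literals `s 0, …, s (k-1)`. -/
def clauseOfFn {V : Type} {k : ℕ} (s : Fin k → Lit V) : Clause V :=
  (List.ofFn s : List (Lit V))

/-- The indexed clause `m` has no duplicate literals. -/
def NoDupIdx {V : Type} {n : ℕ} (m : Fin n → Lit V) : Prop :=
  ∀ j j' : Fin n, m j = m j' → j = j'

/-- The indexed clause `m` has no duplicate atoms: no two (distinct) literals are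
equal or complementary. -/
def NoDupAtomsIdx {V : Type} {n : ℕ} (m : Fin n → Lit V) : Prop :=
  (∀ j j' : Fin n, m j = m j' → j = j') ∧ (∀ j j' : Fin n, m j ≠ (m j').neg)

/-- `Sp` is the family of positive matchers `Σ⁺ᵢⱼ`: `Sp i j = some θ` exactly when a
substitution matching `sᵢ` to `mⱼ` exists, in which case `θ` is such a (partial)
matcher and every total match is an extension of it. -/
def IsMatcherFamilyPos {V : Type} {k n : ℕ} (s : Fin k → Lit V) (m : Fin n → Lit V)
    (Sp : Fin k → Fin n → Option (PSub V)) : Prop :=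
  (∀ i j θ, Sp i j = some θ → Lit.psubst θ (s i) = some (m j)) ∧
  (∀ i j (σ : V → Trm V), Lit.subst σ (s i) = m j → ∃ θ, Sp i j = some θ ∧ PSub.le θ σ)

/-- `Sn` is the family of negative matchers `Σ⁻ᵢⱼ` (matching `sᵢ` to `¬mⱼ`). -/
def IsMatcherFamilyNeg {V : Type} {k n : ℕ} (s : Fin k → Lit V) (m : Fin n → Lit V)
    (Sn : Fin k → Fin n → Option (PSub V)) : Prop :=
  (∀ i j θ, Sn i j = some θ → Lit.psubst θ (s i) = some ((m j).neg)) ∧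
  (∀ i j (σ : V → Trm V), Lit.subst σ (s i) = (m j).neg → ∃ θ, Sn i j = some θ ∧ PSub.le θ σ)

/-- The (predicate, polarity) header of a literal. -/
def Lit.header {V : Type} (l : Lit V) : ℕ × Bool := (l.pred, l.pos)

/-- Satisfiability of the direct SAT encoding `𝓔ᵈ_SR(S,M)` of subsumption resolution. -/
def DirectSRSat {V : Type} {k n : ℕ} (s : Fin k → Lit V) (m : Fin n → Lit V)
    (Sp Sn : Fin k → Fin n → Option (PSub V)) : Prop :=
  ∃ (σ : V → Trm V) (bp bn : Fin k → Fin n → Bool),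
    (∀ i j, bp i j = true → ∃ θ, Sp i j = some θ ∧ PSub.le θ σ) ∧
    (∀ i j, bn i j = true → ∃ θ, Sn i j = some θ ∧ PSub.le θ σ) ∧
    (∃ i j, bn i j = true) ∧
    (∀ i j i' j', bn i j = true → bn i' j' = true → j = j') ∧
    (∀ i, ∃ j, bp i j = true ∨ bn i j = true) ∧
    (∀ i i' j, ¬(bp i j = true ∧ bn i' j = true))

/-- Satisfiability of the indirect SAT encoding `𝓔ⁱ_SR(S,M)` of subsumption resolution. -/
def IndirectSRSat {V : Type} {k n : ℕ} (s : Fin k → Lit V) (m : Fin n → Lit V)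
    (Sp Sn : Fin k → Fin n → Option (PSub V)) : Prop :=
  ∃ (σ : V → Trm V) (bp bn : Fin k → Fin n → Bool) (c : Fin n → Bool),
    (∀ i j, bp i j = true → ∃ θ, Sp i j = some θ ∧ PSub.le θ σ) ∧
    (∀ i j, bn i j = true → ∃ θ, Sn i j = some θ ∧ PSub.le θ σ) ∧
    (∀ j, c j = true ↔ ∃ i, bn i j = true) ∧
    (∃ j, c j = true) ∧
    (∀ j j', c j = true → c j' = true → j = j') ∧
    (∀ i, ∃ j, bp i j = true ∨ bn i j = true) ∧
    (∀ i j, ¬(c j = true ∧ bp i j = true))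

/-- The direct and indirect SAT encodings of subsumption resolution are
equisatisfiable. -/
theorem stmt6 {V : Type} {k n : ℕ} (s : Fin k → Lit V) (m : Fin n → Lit V)
    (hM : NoDupAtomsIdx m)
    (Sp Sn : Fin k → Fin n → Option (PSub V))
    (hSp : IsMatcherFamilyPos s m Sp) (hSn : IsMatcherFamilyNeg s m Sn) :
    DirectSRSat s m Sp Sn ↔ IndirectSRSat s m Sp Sn := by
  constructor
  · rintro ⟨σ, bp, bn, h1, h2, ⟨i0, j0, hij0⟩, hamo, hcomp, hcoh⟩
    refine ⟨σ, bp, bn, fun j => decide (∃ i, bn i j = true), h1, h2, ?_, ?_, ?_, hcomp, ?_⟩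
    · intro j; simp
    · exact ⟨j0, by simp; exact ⟨i0, hij0⟩⟩
    · intro j j' hj hj'
      simp at hj hj'
      obtain ⟨i, hi⟩ := hj; obtain ⟨i', hi'⟩ := hj'
      exact hamo i j i' j' hi hi'
    · intro i j ⟨hc, hb⟩
      simp at hc; obtain ⟨i', hi'⟩ := hc
      exact hcoh i i' j ⟨hb, hi'⟩
  · rintro ⟨σ, bp, bn, c, h1, h2, hc, ⟨j0, hj0⟩, huniq, hcomp, hcoh⟩
    refine ⟨σ, bp, bn, h1, h2, ?_, ?_, hcomp, ?_⟩
    · obtain ⟨i, hi⟩ := (hc j0).mp hj0; exact ⟨i, j0, hi⟩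
    · intro i j i' j' hb hb'
      exact huniq j j' ((hc j).mpr ⟨i, hb⟩) ((hc j').mpr ⟨i', hb'⟩)
    · intro i i' j ⟨hbp, hbn⟩
      exact hcoh i j ⟨(hc j).mpr ⟨i', hbn⟩, hbp⟩
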